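/- Let R be a commutative Noetherian ring, let E be an injective R-module, and let F be a flat R-module. Then the tensor product E ⊗_R F is an injective R-module. -/

import Mathlib

/-!
By Baer's criterion it suffices that restriction `Hom(R, E ⊗ F) → Hom(I, E ⊗ F)` is surjective
for every ideal `I`, and `I` is finitely presented because `R` is Noetherian. For a finitely
presented `P` and flat `F`, the natural map `Hom(P, E) ⊗ F → Hom(P, E ⊗ F)` is bijective: it is
so for finite free `P`, and a finite free presentation of `P` yields two left exact rows
(`Hom(-, E)` is left exact and `- ⊗ F` is exact), to which the five lemma applies. Restriction
`Hom(R, E) ⊗ F → Hom(I, E) ⊗ F` is surjective since `E` is injective, and by naturality so is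
restriction on `Hom(-, E ⊗ F)`.
-/

universe u

open TensorProduct LinearMap

theorem lcomp_comp_rTensorHomToHomRTensor {R M N P Q : Type*} [CommSemiring R]
    [AddCommMonoid M] [AddCommMonoid N] [AddCommMonoid P] [AddCommMonoid Q]
    [Module R M] [Module R N] [Module R P] [Module R Q] (f : M →ₗ[R] N) :
    lcomp R (P ⊗[R] Q) f ∘ₗ rTensorHomToHomRTensor (.id R) N P Q =
      rTensorHomToHomRTensor (.id R) M P Q ∘ₗ (lcomp R P f).rTensor Q := by
  ext g q m
  simp [rTensorHomToHomRTensor_apply]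

section

variable {R E F : Type*} [CommRing R] [AddCommGroup E] [AddCommGroup F] [Module R E]
  [Module R F] [Module.Flat R F]

theorem rTensorHomToHomRTensor_bijective (P : Type*) [AddCommGroup P] [Module R P]
    [Module.FinitePresentation R P] :
    Function.Bijective (rTensorHomToHomRTensor (.id R) P E F) := by
  obtain ⟨n, m, p, d, hp, hdp⟩ := Module.FinitePresentation.exists_fin' R P
  have free_bijective (k : ℕ) :
      Function.Bijective (rTensorHomToHomRTensor (.id R) (Fin k → R) E F) :=
    rTensorHomEquivHomRTensor_toLinearMap R (Fin k → R) E F ▸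
      (rTensorHomEquivHomRTensor R _ E F).bijective
  exact bijective_of_bijective_of_injective_of_left_exact _ _ _ _ _ _ _
    (lcomp_comp_rTensorHomToHomRTensor p) (lcomp_comp_rTensorHomToHomRTensor d)
    (Module.Flat.rTensor_exact F (exact_lcomp_of_exact_of_surjective E hdp hp))
    (exact_lcomp_of_exact_of_surjective (E ⊗[R] F) hdp hp)
    (free_bijective n) (free_bijective m).injective
    (Module.Flat.rTensor_preserves_injective_linearMap _ (lcomp_injective_of_surjective _ hp))
    (lcomp_injective_of_surjective _ hp)

theorem lcomp_tensorProduct_surjective {M N : Type*} [AddCommGroup M] [AddCommGroup N]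
    [Module R M] [Module R N] [Module.FinitePresentation R M] {f : M →ₗ[R] N}
    (hf : Function.Surjective (lcomp R E f)) :
    Function.Surjective (lcomp R (E ⊗[R] F) f) := by
  refine Function.Surjective.of_comp (g := rTensorHomToHomRTensor (.id R) N E F) ?_
  rw [← coe_comp, lcomp_comp_rTensorHomToHomRTensor]
  exact (rTensorHomToHomRTensor_bijective M).surjective.comp (rTensor_surjective F hf)

end

theorem injective_tensorProduct_flat
    (R : Type u) [CommRing R] [IsNoetherianRing R]
    (E : Type u) [AddCommGroup E] [Module R E]
    (F : Type u) [AddCommGroup F] [Module R F]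
    (hE : Module.Injective R E) (hF : Module.Flat R F) :
    Module.Injective R (E ⊗[R] F) := by
  have restrict_surjective := Module.Baer.iff_surjective.mp (Module.Baer.of_injective hE)
  refine Module.Baer.injective (Module.Baer.iff_surjective.mpr fun I => ?_)
  have : Module.FinitePresentation R I := Module.finitePresentation_of_finite R I
  exact lcomp_tensorProduct_surjective (restrict_surjective I)
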